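/- For μ ≥ 1 and 1 ≤ i ≤ μ, the function R_i^μ(x) = Σ_{k=0}^{i−1} (−1)^{k−i} x^{μ+i−k−1}/(k!(μ+i−k−1)!) + b Σ_{k=i}^{μ+i−1} (−1)^{k−i} x^{μ+i−k−1}/(k!(μ+i−k−1)!) equals (−1)^i (x−1)^{μ+i−1}/(μ+i−1)! + (−1)^{μ−1}(b−1) Σ_{j=0}^{μ−1} (−x)^j/(j!(μ+i−j−1)!). -/

import Mathlib

/-!
With `n = μ + i - 1` and `g k = (-1)^k x^(n-k) / (k! (n-k)!)`, the left side is
`(-1)^i (∑_{k<i} g k + b ∑_{i≤k≤n} g k)`. The full sum `∑_{k≤n} g k` is `(x-1)^n / n!` by the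
binomial theorem, and the reflection `k ↦ n - k` turns the tail `∑_{i≤k≤n} g k` into
`(-1)^n ∑_{j<μ} (-x)^j / (j! (n-j)!)`.
-/

open Finset Nat

theorem neg_one_pow_sub_of_le {R : Type*} [CommRing R] {m n : ℕ} (h : m ≤ n) :
    (-1 : R) ^ (n - m) = (-1) ^ n * (-1) ^ m := by
  obtain ⟨k, rfl⟩ := exists_add_of_le h
  rw [Nat.add_sub_cancel_left, pow_add, mul_right_comm, ← pow_add, ← two_mul, pow_mul, neg_one_sq,
    one_pow, one_mul]

theorem neg_one_zpow_natCast_sub_natCast {K : Type*} [DivisionRing K] (m n : ℕ) :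
    (-1 : K) ^ ((m : ℤ) - n) = (-1) ^ m * (-1) ^ n := by
  rw [zpow_sub₀ (neg_ne_zero.mpr one_ne_zero), zpow_natCast, zpow_natCast, div_eq_mul_inv,
    ← inv_pow, inv_neg, inv_one]

theorem add_pow_div_factorial {K : Type*} [Field K] [CharZero K] (x y : K) (n : ℕ) :
    (x + y) ^ n / n ! = ∑ k ∈ range (n + 1), x ^ k * y ^ (n - k) / (k ! * (n - k)!) := by
  rw [add_pow, sum_div]
  refine sum_congr rfl fun k hk => ?_
  rw [Nat.cast_choose K (Nat.lt_succ_iff.mp (mem_range.mp hk))]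
  field_simp [Nat.cast_ne_zero.mpr (factorial_ne_zero n)]

theorem sum_Icc_neg_one_pow_mul_pow_div_factorial {K : Type*} [Field K] (x : K) {i n : ℕ}
    (hi : i ≤ n + 1) :
    ∑ k ∈ Icc i n, (-1) ^ k * x ^ (n - k) / (k ! * (n - k)! : K)
      = (-1) ^ n * ∑ j ∈ range (n + 1 - i), (-x) ^ j / (j ! * (n - j)! : K) := by
  have reflect := sum_Ico_reflect (fun k => (-1) ^ k * x ^ (n - k) / (k ! * (n - k)! : K)) 0
    (Nat.sub_le (n + 1) i)
  rw [Nat.sub_sub_self hi, Nat.sub_zero, ← range_eq_Ico] at reflect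
  rw [← Ico_add_one_right_eq_Icc, ← reflect, mul_sum]
  refine sum_congr rfl fun j hj => ?_
  have hjn : j ≤ n := by have := mem_range.mp hj; omega
  rw [Nat.sub_sub_self hjn, neg_one_pow_sub_of_le hjn, neg_pow]
  ring

theorem stmt_19_general (b x : ℂ) (μ i : ℕ) (hμ : 1 ≤ μ) :
    (∑ k ∈ Finset.range i, (-1 : ℂ) ^ ((k : ℤ) - (i : ℤ)) *
        x ^ (μ + i - k - 1) / ((k.factorial : ℂ) * ((μ + i - k - 1).factorial : ℂ)))
      + b * ∑ k ∈ Finset.Icc i (μ + i - 1), (-1 : ℂ) ^ ((k : ℤ) - (i : ℤ)) *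
          x ^ (μ + i - k - 1) / ((k.factorial : ℂ) * ((μ + i - k - 1).factorial : ℂ))
    = (-1 : ℂ) ^ i * (x - 1) ^ (μ + i - 1) / ((μ + i - 1).factorial : ℂ)
      + (-1 : ℂ) ^ (μ - 1) * (b - 1) *
        ∑ j ∈ Finset.range μ, (-x) ^ j / ((j.factorial : ℂ) * ((μ + i - j - 1).factorial : ℂ)) := by
  obtain ⟨n, hn⟩ : ∃ n, μ + i = n + 1 := ⟨μ + i - 1, by omega⟩
  set g : ℕ → ℂ := fun k => (-1) ^ k * x ^ (n - k) / (k ! * (n - k)!)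
  have hterm (k : ℕ) : (-1 : ℂ) ^ ((k : ℤ) - i) * x ^ (μ + i - k - 1) / (k ! * (μ + i - k - 1)!)
      = (-1) ^ i * g k := by
    rw [neg_one_zpow_natCast_sub_natCast, Nat.sub_right_comm, hn, Nat.add_sub_cancel]
    ring
  have hbinom : ∑ k ∈ range i, g k + ∑ k ∈ Icc i n, g k = (x - 1) ^ n / n ! := by
    rw [← Ico_add_one_right_eq_Icc, sum_range_add_sum_Ico _ (by omega), sub_eq_neg_add,
      add_pow_div_factorial]
  have hreflect := sum_Icc_neg_one_pow_mul_pow_div_factorial x (i := i) (n := n) (by omega)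
  have hsign : (-1 : ℂ) ^ (μ - 1) = (-1) ^ i * (-1) ^ n := by
    rw [show μ - 1 = n - i by omega, neg_one_pow_sub_of_le (by omega), mul_comm]
  simp only [hterm, ← mul_sum]
  simp only [hn, Nat.sub_right_comm (n + 1) _ 1, Nat.add_sub_cancel]
  rw [show n + 1 - i = μ by omega] at hreflect
  linear_combination (-1 : ℂ) ^ i * hbinom + (b - 1) * (-1) ^ i * hreflect
    - (b - 1) * (∑ j ∈ range μ, (-x) ^ j / (j ! * (n - j)! : ℂ)) * hsign

/-- The polynomial identity
`R_i^μ(x) = ∑_{k=0}^{i-1} (-1)^{k-i} x^{μ+i-k-1}/(k!(μ+i-k-1)!)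
 + b ∑_{k=i}^{μ+i-1} (-1)^{k-i} x^{μ+i-k-1}/(k!(μ+i-k-1)!)
 = (-1)^i (x-1)^{μ+i-1}/(μ+i-1)!
 + (-1)^{μ-1}(b-1) ∑_{j=0}^{μ-1} (-x)^j/(j!(μ+i-j-1)!)`. -/
theorem stmt_19 (b x : ℂ) (μ i : ℕ) (hμ : 1 ≤ μ) (hi1 : 1 ≤ i) (hiμ : i ≤ μ) :
    (∑ k ∈ Finset.range i, (-1 : ℂ) ^ ((k : ℤ) - (i : ℤ)) *
        x ^ (μ + i - k - 1) / ((k.factorial : ℂ) * ((μ + i - k - 1).factorial : ℂ)))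
      + b * ∑ k ∈ Finset.Icc i (μ + i - 1), (-1 : ℂ) ^ ((k : ℤ) - (i : ℤ)) *
          x ^ (μ + i - k - 1) / ((k.factorial : ℂ) * ((μ + i - k - 1).factorial : ℂ))
    = (-1 : ℂ) ^ i * (x - 1) ^ (μ + i - 1) / ((μ + i - 1).factorial : ℂ)
      + (-1 : ℂ) ^ (μ - 1) * (b - 1) *
        ∑ j ∈ Finset.range μ, (-x) ^ j / ((j.factorial : ℂ) * ((μ + i - j - 1).factorial : ℂ)) :=
  stmt_19_general b x μ i hμ
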